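/- arXiv:1612.06499 — 5 statements merged into one kernel-verified Lean document; each statement's English description precedes it below -/
import Mathlib

section
/- Invariable generation is closed under extensions: if N is a normal subgroup of G such that both N and G/N are invariably generated, then G is invariably generated. -/
/-- A group is invariably generated if its only classful subgroup
(i.e. subgroup meeting every conjugacy class) is the whole group. -/
def IsInvariablyGenerated (G : Type*) [Group G] : Prop :=
  ∀ H : Subgroup G, (∀ g : G, ∃ x : G, x * g * x⁻¹ ∈ H) → H = ⊤

theorem invariably_generated_extension_closed {G : Type*} [Group G]
    (N : Subgroup G) [N.Normal]
    (hN : IsInvariablyGenerated N) (hQ : IsInvariablyGenerated (G ⧸ N)) :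
    IsInvariablyGenerated G := by
  intro H hH
  -- Step 1: the image of H in G/N is classful, hence equal to ⊤.
  have hmap : H.map (QuotientGroup.mk' N) = ⊤ := by
    apply hQ
    intro q
    obtain ⟨g, rfl⟩ := QuotientGroup.mk'_surjective N q
    obtain ⟨x, hx⟩ := hH g
    exact ⟨QuotientGroup.mk' N x, ⟨x * g * x⁻¹, hx, by simp⟩⟩
  -- Step 2: every g ∈ G can be written as h * m with h ∈ H, m ∈ N.
  have hsurj : ∀ g : G, ∃ h ∈ H, h⁻¹ * g ∈ N := by
    intro g
    have hg : QuotientGroup.mk' N g ∈ H.map (QuotientGroup.mk' N) := by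
      rw [hmap]; exact Subgroup.mem_top _
    obtain ⟨h, hh, heq⟩ := hg
    refine ⟨h, hh, ?_⟩
    have : (h : G ⧸ N) = (g : G ⧸ N) := heq
    exact (QuotientGroup.eq.mp this)
  -- Step 3: N ≤ H, since H ∩ N is classful in N.
  have hNH : N ≤ H := by
    rw [← Subgroup.subgroupOf_eq_top]
    apply hN
    rintro ⟨n, hn⟩
    obtain ⟨g, hg⟩ := hH n
    obtain ⟨h, hh, hm⟩ := hsurj g
    refine ⟨⟨h⁻¹ * g, hm⟩, ?_⟩
    show (h⁻¹ * g) * n * (h⁻¹ * g)⁻¹ ∈ H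
    have : (h⁻¹ * g) * n * (h⁻¹ * g)⁻¹ = h⁻¹ * (g * n * g⁻¹) * h := by
      group
    rw [this]
    exact Subgroup.mul_mem _ (Subgroup.mul_mem _ (Subgroup.inv_mem _ hh) hg) hh
  -- Step 4: conclude H = ⊤.
  rw [eq_top_iff]
  intro g _
  obtain ⟨h, hh, hm⟩ := hsurj g
  have : g = h * (h⁻¹ * g) := by group
  rw [this]
  exact Subgroup.mul_mem _ hh (hNH hm)
end

section
/- For any real number a > 1 and any two nondegenerate compact intervals I = [p,q] and J = [r,s] with p < q and r < s, there exists an orientation-preserving piecewise linear homeomorphism from I onto J all of whose slopes lie in the multiplicative group a^ℤ = {aⁿ : n ∈ ℤ}. -/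
open Set

/-- For any `a > 1` and nondegenerate compact intervals `[p,q]`, `[r,s]`, there is an
orientation-preserving piecewise linear homeomorphism from `[p,q]` onto `[r,s]`
all of whose slopes are integer powers of `a`. -/
theorem exists_PL_homeo_slopes_in_powers (a p q r s : ℝ)
    (ha : 1 < a) (hpq : p < q) (hrs : r < s) :
    ∃ f : ℝ → ℝ, StrictMonoOn f (Icc p q) ∧ ContinuousOn f (Icc p q) ∧
      f p = r ∧ f q = s ∧ f '' Icc p q = Icc r s ∧
      ∃ n : ℕ, ∃ x : Fin (n + 1) → ℝ, StrictMono x ∧ x 0 = p ∧ x (Fin.last n) = q ∧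
        ∀ i : Fin n, ∃ (m : ℤ) (d : ℝ),
          ∀ t ∈ Icc (x i.castSucc) (x i.succ), f t = a ^ m * t + d := by
  have hL : (0:ℝ) < q - p := sub_pos.2 hpq
  have hM : (0:ℝ) < s - r := sub_pos.2 hrs
  have hc : 0 < (s - r) / (q - p) := div_pos hM hL
  obtain ⟨j, hj1, hj2⟩ := exists_mem_Ico_zpow hc ha
  have ha0 : (0:ℝ) < a := lt_trans one_pos ha
  set c1 : ℝ := a ^ (j - 1) with hc1def
  set c2 : ℝ := a ^ (j + 1) with hc2def
  have hc1pos : 0 < c1 := zpow_pos ha0 _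
  have hc2pos : 0 < c2 := zpow_pos ha0 _
  have hc1lt : c1 < (s - r)/(q - p) :=
    lt_of_lt_of_le (zpow_lt_zpow_right₀ ha (by omega)) hj1
  have hltc2 : (s - r)/(q - p) < c2 := hj2
  have h12 : c1 < c2 := hc1lt.trans hltc2
  have hd : 0 < c2 - c1 := sub_pos.2 h12
  have hdne : c2 - c1 ≠ 0 := ne_of_gt hd
  have h1 : c1 * (q - p) < s - r := (lt_div_iff₀ hL).1 hc1lt
  have h2 : s - r < c2 * (q - p) := (div_lt_iff₀ hL).1 hltc2
  set x1 : ℝ := p + (c2*(q-p) - (s-r))/(c2-c1) with hx1def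
  have hkey : c1*(x1-p) + c2*(q-x1) = s - r := by
    rw [hx1def]
    field_simp
    ring
  have hpx1 : p < x1 := by
    have hnum : 0 < c2*(q-p) - (s-r) := by linarith
    have := div_pos hnum hd
    rw [hx1def]; linarith
  have hx1q : x1 < q := by
    have : (c2*(q-p) - (s-r))/(c2-c1) < q - p := by
      rw [div_lt_iff₀ hd]; nlinarith
    rw [hx1def]; linarith
  set f : ℝ → ℝ := fun t => if t ≤ x1 then c1*(t-p)+r else c2*(t-q)+s with hfdef
  have hagree : c1*(x1-p)+r = c2*(x1-q)+s := by linarith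
  have hmono : StrictMono f := by
    intro u v huv
    simp only [hfdef]
    split_ifs with hu hv hv
    · nlinarith
    · push_neg at hv
      nlinarith
    · exact absurd (le_trans huv.le hv) hu
    · push_neg at hu
      nlinarith
  have hcont : Continuous f := by
    apply Continuous.if_le
      ((continuous_const.mul (continuous_id.sub continuous_const)).add continuous_const)
      ((continuous_const.mul (continuous_id.sub continuous_const)).add continuous_const)
      continuous_id continuous_const
    intro t ht
    subst ht
    exact hagree
  have hfp : f p = r := by
    simp only [hfdef, if_pos hpx1.le]; ring
  have hfq : f q = s := by
    simp only [hfdef, if_neg (not_le.2 hx1q)]; ring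
  have himg : f '' Icc p q = Icc r s := by
    apply Subset.antisymm
    · rintro y ⟨t, ht, rfl⟩
      constructor
      · rw [← hfp]; exact hmono.monotone ht.1
      · rw [← hfq]; exact hmono.monotone ht.2
    · rw [← hfp, ← hfq]
      exact intermediate_value_Icc hpq.le hcont.continuousOn
  refine ⟨f, hmono.strictMonoOn _, hcont.continuousOn, hfp, hfq, himg, 2, ![p, x1, q], ?_, ?_, ?_, ?_⟩
  · intro i k hik
    fin_cases i <;> fin_cases k <;>
      simp_all [Fin.lt_def] <;> linarith
  · simp
  · simp [Fin.last]
  · intro i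
    fin_cases i
    · refine ⟨j - 1, r - c1*p, fun t ht => ?_⟩
      simp only [Fin.castSucc, Fin.succ, Matrix.cons_val_zero, Matrix.cons_val_one,
        Matrix.head_cons, Fin.isValue] at ht ⊢
      have ht2 : t ≤ x1 := ht.2
      simp only [hfdef, if_pos ht2, ← hc1def]
      ring
    · refine ⟨j + 1, s - c2*q, fun t ht => ?_⟩
      simp only [Fin.castSucc, Fin.succ, Matrix.cons_val_one, Matrix.head_cons,
        Fin.isValue] at ht ⊢
      rcases le_or_gt t x1 with hle | hlt
      · have : t = x1 := le_antisymm hle ht.1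
        subst this
        simp only [hfdef, if_pos le_rfl, ← hc2def]
        linear_combination hagree
      · simp only [hfdef, if_neg (not_le.2 hlt), ← hc2def]
        ring
end

section
/- For any real a > 1, there is a piecewise linear homeomorphism from [p,q] to [r,s] (p<q, r<s) whose graph consists of exactly two linear pieces, with slopes aⁿ and a^{-m} for some positive integers n, m; specifically, for n, m sufficiently large, the line of slope aⁿ through (p,r) and the line of slope a^{-m} through (q,s) intersect inside the open rectangle (p,q) × (r,s). -/
open Set

set_option maxHeartbeats 800000

/-- For `n`, `m` large, the line of slope `a^n` through `(p,r)` and the line of slope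
`a^{-m}` through `(q,s)` meet inside the open rectangle `(p,q) × (r,s)`, producing a
two-piece PL homeomorphism from `[p,q]` onto `[r,s]` with slopes `a^n` and `a^{-m}`. -/
theorem exists_two_piece_PL_homeo (a p q r s : ℝ)
    (ha : 1 < a) (hpq : p < q) (hrs : r < s) :
    ∃ N M : ℕ, ∀ n m : ℕ, N ≤ n → M ≤ m →
      ∃ u v : ℝ, u ∈ Ioo p q ∧ v ∈ Ioo r s ∧
        v = a ^ (n : ℤ) * (u - p) + r ∧ v = a ^ (-(m : ℤ)) * (u - q) + s ∧
        ∃ f : ℝ → ℝ,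
          (∀ t ∈ Icc p u, f t = a ^ (n : ℤ) * (t - p) + r) ∧
          (∀ t ∈ Icc u q, f t = a ^ (-(m : ℤ)) * (t - q) + s) ∧
          StrictMonoOn f (Icc p q) ∧ f '' Icc p q = Icc r s := by
  have hqp : (0:ℝ) < q - p := by linarith
  have hsr : (0:ℝ) < s - r := by linarith
  have ha0 : (0:ℝ) < a := by linarith
  obtain ⟨N, hN⟩ := pow_unbounded_of_one_lt ((s-r)/(q-p)) ha
  obtain ⟨M, hM⟩ := pow_unbounded_of_one_lt ((q-p)/(s-r)) ha
  refine ⟨N, M, fun n m hn hm => ?_⟩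
  have hAn : (s-r)/(q-p) < a ^ n := hN.trans_le (pow_le_pow_right₀ ha.le hn)
  have hAm : (q-p)/(s-r) < a ^ m := hM.trans_le (pow_le_pow_right₀ ha.le hm)
  set A := a ^ (n:ℤ) with hAdef
  set B := a ^ (-(m:ℤ)) with hBdef
  have hA : A = a ^ n := zpow_natCast a n
  have hB : B = (a ^ m)⁻¹ := by rw [hBdef, zpow_neg, zpow_natCast]
  have hApos : 0 < A := by rw [hA]; positivity
  have hBpos : 0 < B := by rw [hB]; positivity
  have h1 : s - r < A * (q - p) := by
    rw [div_lt_iff₀ hqp] at hAn; rw [hA]; linarith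
  have h2 : B * (q - p) < s - r := by
    rw [div_lt_iff₀ hsr] at hAm
    have hpm : 0 < a ^ m := by positivity
    rw [hB]
    rw [inv_mul_lt_iff₀ hpm]
    nlinarith
  have hAB : 0 < A - B := by nlinarith
  set u := (A*p - B*q + s - r)/(A - B) with hu
  have hup : p < u := by rw [hu, lt_div_iff₀ hAB]; nlinarith
  have huq : u < q := by rw [hu, div_lt_iff₀ hAB]; nlinarith
  set v := A * (u - p) + r with hv
  have hkey : A * (u - p) + r = B * (u - q) + s := by
    rw [hu]; field_simp; ring
  have hvr : r < v := by rw [hv]; nlinarith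
  have hvs : v < s := by rw [hv, hkey]; nlinarith
  refine ⟨u, v, ⟨hup, huq⟩, ⟨hvr, hvs⟩, rfl, by rw [hv, hkey], ?_⟩
  classical
  set f : ℝ → ℝ := fun t => if t ≤ u then A * (t - p) + r else B * (t - q) + s with hf
  have hf1 : ∀ t ∈ Icc p u, f t = A * (t - p) + r := by
    intro t ht; simp only [hf]; rw [if_pos ht.2]
  have hf2 : ∀ t ∈ Icc u q, f t = B * (t - q) + s := by
    intro t ht
    by_cases htu : t ≤ u
    · have : t = u := le_antisymm htu ht.1
      simp only [hf, this, if_pos le_rfl]; exact hkey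
    · simp only [hf]; rw [if_neg htu]
  have hsm : StrictMonoOn f (Icc p q) := by
    intro x hx y hy hxy
    simp only [hf]
    by_cases hxu : x ≤ u
    · by_cases hyu : y ≤ u
      · rw [if_pos hxu, if_pos hyu]
        have := mul_lt_mul_of_pos_left (show x - p < y - p by linarith) hApos
        linarith
      · push_neg at hyu
        rw [if_pos hxu, if_neg (not_le.mpr hyu)]
        have h3 := mul_le_mul_of_nonneg_left (show x - p ≤ u - p by linarith) hApos.le
        have h4 := mul_lt_mul_of_pos_left (show u - q < y - q by linarith) hBpos
        linarith
    · push_neg at hxu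
      have hyu : ¬ y ≤ u := not_le.mpr (hxu.trans hxy)
      rw [if_neg (not_le.mpr hxu), if_neg hyu]
      have := mul_lt_mul_of_pos_left (show x - q < y - q by linarith) hBpos
      linarith
  have hfp : f p = r := by
    rw [hf1 p ⟨le_rfl, hup.le⟩]; ring
  have hfq : f q = s := by
    rw [hf2 q ⟨huq.le, le_rfl⟩]; ring
  have hcont : Continuous f := by
    apply Continuous.if_le (by continuity) (by continuity) continuous_id continuous_const
    intro x hx; rw [show x = u from hx]; exact hkey
  refine ⟨f, hf1, hf2, hsm, ?_⟩
  apply Subset.antisymm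
  · rintro _ ⟨t, ht, rfl⟩
    have hmono := hsm.monotoneOn
    constructor
    · rw [← hfp]; exact hmono ⟨le_rfl, hpq.le⟩ ht ht.1
    · rw [← hfq]; exact hmono ht ⟨hpq.le, le_rfl⟩ ht.2
  · have := intermediate_value_Icc hpq.le hcont.continuousOn
    rwa [hfp, hfq] at this
end

section
/- For every odd positive integer k, there exists an element g of Thompson's group F such that g(x) > x for all x ∈ (0,1), g′(0) = 2, g′(1) = 1/2, and for all sufficiently large j, the points 2^{-j} and 1 - k·2^{-j} lie on the same ⟨g⟩-orbit. -/
open Set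

/-- A real number is dyadic rational. -/
def IsDyadic (x : ℝ) : Prop := ∃ m : ℤ, ∃ k : ℕ, x = m / 2 ^ k

/-- Membership in Thompson's group `F`, viewed as the group of those homeomorphisms of `ℝ`
that are the identity outside `[0,1]` and restrict to orientation-preserving piecewise
linear homeomorphisms of `[0,1]` with all slopes integer powers of `2` and all
breakpoints dyadic rationals. -/
def MemF (f : ℝ → ℝ) : Prop :=
  Function.Bijective f ∧ StrictMono f ∧ f 0 = 0 ∧ f 1 = 1 ∧
  (∀ x, x ∉ Icc (0 : ℝ) 1 → f x = x) ∧
  ∃ n : ℕ, ∃ x : Fin (n + 1) → ℝ, StrictMono x ∧ x 0 = 0 ∧ x (Fin.last n) = 1 ∧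
    (∀ i, IsDyadic (x i)) ∧
    ∀ i : Fin n, ∃ (m : ℤ) (d : ℝ),
      ∀ t ∈ Icc (x i.castSucc) (x i.succ), f t = 2 ^ m * t + d

/-- `f` has right derivative `c` at `0`, i.e. `f` is linear of slope `c` near `0`. -/
def Slope0 (f : ℝ → ℝ) (c : ℝ) : Prop :=
  ∃ ε > (0 : ℝ), ∀ t ∈ Icc (0 : ℝ) ε, f t = c * t

/-- `f` has left derivative `c` at `1`, i.e. `f` is linear of slope `c` near `1`. -/
def Slope1 (f : ℝ → ℝ) (c : ℝ) : Prop :=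
  ∃ ε > (0 : ℝ), ∀ t ∈ Icc (1 - ε) (1 : ℝ), f t = c * (t - 1) + 1


namespace TFAux

/-- auxiliary clog bound -/
lemma clog2_lt {n : ℕ} (hn : 0 < n) : 2 ^ Nat.clog 2 n < 2 * n := by
  rcases eq_or_lt_of_le (by omega : 1 ≤ n) with h | h
  · simp [← h, Nat.clog_one_right]
  · have h2 : 2 ≤ n := h
    have hp : 0 < Nat.clog 2 n := Nat.clog_pos one_lt_two h2
    have := Nat.pow_pred_clog_lt_self (b := 2) one_lt_two (x := n) h2
    rw [Nat.pred_eq_sub_one] at this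
    have he : 2 ^ Nat.clog 2 n = 2 * 2 ^ (Nat.clog 2 n - 1) := by
      rw [← pow_succ']
      congr 1
      omega
    omega

variable (k : ℕ)

def B : ℕ := Nat.clog 2 k + 2
def D : ℕ := 8 * k - 2 ^ B k
def E : ℕ := Nat.clog 2 (D k)

noncomputable def K : ℝ := k / 2 ^ B k
noncomputable def W : ℝ := D k / 2 ^ (E k + 1) - 1/4
noncomputable def S : ℝ := 2 ^ ((E k : ℤ) - (B k : ℤ))

variable {k}

lemma h2B : 2 ^ B k = 4 * 2 ^ Nat.clog 2 k := by
  rw [B, pow_add]; ring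

lemma hB8k (hk : 0 < k) : 2 ^ B k < 8 * k := by
  have := clog2_lt hk
  rw [h2B]; omega

lemma hkB : 4 * k ≤ 2 ^ B k := by
  have := Nat.le_pow_clog one_lt_two k
  rw [h2B]; omega

lemma hDpos (hk : 0 < k) : 0 < D k := by
  have := hB8k hk; rw [D]; omega

lemma hDle : D k ≤ 2 ^ B k := by
  have := hkB (k := k); rw [D]; omega

lemma hDE : D k ≤ 2 ^ E k := Nat.le_pow_clog one_lt_two _

lemma hED (hk : 0 < k) : 2 ^ E k < 2 * D k := clog2_lt (hDpos hk)

lemma hEB (hk : 0 < k) : E k ≤ B k := by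
  have h1 := hED hk
  have h2 := hDle (k := k)
  have : 2 ^ E k < 2 ^ (B k + 1) := by
    calc 2 ^ E k < 2 * D k := h1
    _ ≤ 2 * 2 ^ B k := by omega
    _ = 2 ^ (B k + 1) := by rw [pow_succ]; ring
  have := (Nat.pow_lt_pow_iff_right (a := 2) one_lt_two).mp this
  omega

-- real versions
lemma hBpow_pos : (0:ℝ) < 2 ^ B k := by positivity

lemma hKpos (hk : 0 < k) : 0 < K k := by
  rw [K]; positivity

lemma hKle : K k ≤ 1/4 := by
  have h := hkB (k := k)
  have h' : (4:ℝ) * k ≤ 2 ^ B k := by exact_mod_cast h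
  rw [K, div_le_iff₀ (hBpow_pos)]
  linarith

lemma hKgt (hk : 0 < k) : 1/8 < K k := by
  have h := hB8k hk
  have h' : (2:ℝ) ^ B k < 8 * k := by exact_mod_cast h
  rw [K, lt_div_iff₀ (hBpow_pos)]
  linarith

lemma hEpow_pos : (0:ℝ) < 2 ^ (E k + 1) := by positivity

lemma hW0 (hk : 0 < k) : 0 < W k := by
  have h := hED hk
  have h' : (2:ℝ) ^ E k < 2 * D k := by exact_mod_cast h
  have hp : (2:ℝ) ^ (E k + 1) = 2 * 2 ^ E k := by rw [pow_succ]; ring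
  rw [W, sub_pos, lt_div_iff₀ (hEpow_pos), hp]
  nlinarith [pow_pos (by norm_num : (0:ℝ) < 2) (E k)]

lemma hWle : W k ≤ 1/4 := by
  have h := hDE (k := k)
  have h' : (D k : ℝ) ≤ 2 ^ E k := by exact_mod_cast h
  have hp : (2:ℝ) ^ (E k + 1) = 2 * 2 ^ E k := by rw [pow_succ]; ring
  rw [W, sub_le_iff_le_add, div_le_iff₀ (hEpow_pos), hp]
  nlinarith [pow_pos (by norm_num : (0:ℝ) < 2) (E k)]

lemma hS0 : 0 < S k := by
  rw [S]; positivity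

lemma hDcast (hk : 0 < k) : (D k : ℝ) = 8 * k - 2 ^ B k := by
  have := hB8k hk
  rw [D, Nat.cast_sub (by omega)]
  push_cast; ring

lemma hSval : S k = 2 ^ E k / 2 ^ B k := by
  rw [S, zpow_sub₀ (by norm_num : (2:ℝ) ≠ 0), zpow_natCast, zpow_natCast]

lemma hSW (hk : 0 < k) : S k * (W k + 1/4) = 4 * K k - 1/2 := by
  have hE0 : (0:ℝ) < 2 ^ E k := by positivity
  have hB0 : (0:ℝ) < 2 ^ B k := by positivity
  rw [hSval, W, K, hDcast hk]
  have hp : (2:ℝ) ^ (E k + 1) = 2 * 2 ^ E k := by rw [pow_succ]; ring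
  rw [hp]
  field_simp
  ring

end TFAux

namespace TFAux

variable (k : ℕ)

/-- the element of Thompson's group -/
noncomputable def g : ℝ → ℝ := fun t =>
  min t 0
  + 2 * (max (min t (1/2 - K k)) 0)
  + (max (min t (1/2)) (1/2 - K k) - (1/2 - K k))
  + S k * (max (min t (1/2 + W k/4)) (1/2) - 1/2)
  + (S k/2) * (max (min t (1/2 + W k/2)) (1/2 + W k/4) - (1/2 + W k/4))
  + (S k/4) * (max (min t (3/4)) (1/2 + W k/2) - (1/2 + W k/2))
  + (1/2) * (max (min t 1) (3/4) - 3/4)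
  + (max t 1 - 1)

variable {k}

lemma eval0 (hk : 0 < k) {t : ℝ} (h : t ≤ 0) : g k t = t := by
  have hK4 := hKle (k := k)
  have hK0 := hKpos hk
  have hW1 := hW0 hk
  have hW4 := hWle (k := k)
  rw [g]
  rw [min_eq_left h]
  rw [min_eq_left (by linarith : t ≤ 1/2 - K k), max_eq_right (by linarith : t ≤ (0:ℝ))]
  rw [min_eq_left (by linarith : t ≤ (1:ℝ)/2), max_eq_right (by linarith : t ≤ 1/2 - K k)]
  rw [min_eq_left (by linarith : t ≤ 1/2 + W k/4), max_eq_right (by linarith : t ≤ (1:ℝ)/2)]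
  rw [min_eq_left (by linarith : t ≤ 1/2 + W k/2), max_eq_right (by linarith : t ≤ 1/2 + W k/4)]
  rw [min_eq_left (by linarith : t ≤ (3:ℝ)/4), max_eq_right (by linarith : t ≤ 1/2 + W k/2)]
  rw [min_eq_left (by linarith : t ≤ (1:ℝ)), max_eq_right (by linarith : t ≤ (3:ℝ)/4)]
  rw [max_eq_right (by linarith : t ≤ (1:ℝ))]
  ring

lemma eval1 (hk : 0 < k) {t : ℝ} (h0 : 0 ≤ t) (h1 : t ≤ 1/2 - K k) : g k t = 2 * t := by
  have hK4 := hKle (k := k)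
  have hK0 := hKpos hk
  have hW1 := hW0 hk
  have hW4 := hWle (k := k)
  rw [g]
  rw [min_eq_right h0]
  rw [min_eq_left h1, max_eq_left h0]
  rw [min_eq_left (by linarith : t ≤ (1:ℝ)/2), max_eq_right h1]
  rw [min_eq_left (by linarith : t ≤ 1/2 + W k/4), max_eq_right (by linarith : t ≤ (1:ℝ)/2)]
  rw [min_eq_left (by linarith : t ≤ 1/2 + W k/2), max_eq_right (by linarith : t ≤ 1/2 + W k/4)]
  rw [min_eq_left (by linarith : t ≤ (3:ℝ)/4), max_eq_right (by linarith : t ≤ 1/2 + W k/2)]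
  rw [min_eq_left (by linarith : t ≤ (1:ℝ)), max_eq_right (by linarith : t ≤ (3:ℝ)/4)]
  rw [max_eq_right (by linarith : t ≤ (1:ℝ))]
  ring

lemma eval2 (hk : 0 < k) {t : ℝ} (h0 : 1/2 - K k ≤ t) (h1 : t ≤ 1/2) : g k t = t + (1/2 - K k) := by
  have hK4 := hKle (k := k)
  have hK0 := hKpos hk
  have hW1 := hW0 hk
  have hW4 := hWle (k := k)
  rw [g]
  rw [min_eq_right (by linarith : (0:ℝ) ≤ t)]
  rw [min_eq_right h0, max_eq_left (by linarith : (0:ℝ) ≤ 1/2 - K k)]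
  rw [min_eq_left h1, max_eq_left h0]
  rw [min_eq_left (by linarith : t ≤ 1/2 + W k/4), max_eq_right h1]
  rw [min_eq_left (by linarith : t ≤ 1/2 + W k/2), max_eq_right (by linarith : t ≤ 1/2 + W k/4)]
  rw [min_eq_left (by linarith : t ≤ (3:ℝ)/4), max_eq_right (by linarith : t ≤ 1/2 + W k/2)]
  rw [min_eq_left (by linarith : t ≤ (1:ℝ)), max_eq_right (by linarith : t ≤ (3:ℝ)/4)]
  rw [max_eq_right (by linarith : t ≤ (1:ℝ))]
  ring

lemma eval3 (hk : 0 < k) {t : ℝ} (h0 : 1/2 ≤ t) (h1 : t ≤ 1/2 + W k/4) :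
    g k t = S k * t + (1 - K k - S k / 2) := by
  have hK4 := hKle (k := k)
  have hK0 := hKpos hk
  have hW1 := hW0 hk
  have hW4 := hWle (k := k)
  rw [g]
  rw [min_eq_right (by linarith : (0:ℝ) ≤ t)]
  rw [min_eq_right (by linarith : 1/2 - K k ≤ t), max_eq_left (by linarith : (0:ℝ) ≤ 1/2 - K k)]
  rw [min_eq_right h0, max_eq_left (by linarith : 1/2 - K k ≤ (1:ℝ)/2)]
  rw [min_eq_left h1, max_eq_left h0]
  rw [min_eq_left (by linarith : t ≤ 1/2 + W k/2), max_eq_right h1]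
  rw [min_eq_left (by linarith : t ≤ (3:ℝ)/4), max_eq_right (by linarith : t ≤ 1/2 + W k/2)]
  rw [min_eq_left (by linarith : t ≤ (1:ℝ)), max_eq_right (by linarith : t ≤ (3:ℝ)/4)]
  rw [max_eq_right (by linarith : t ≤ (1:ℝ))]
  ring

lemma eval4 (hk : 0 < k) {t : ℝ} (h0 : 1/2 + W k/4 ≤ t) (h1 : t ≤ 1/2 + W k/2) :
    g k t = S k / 2 * t + (1 - K k + S k * W k / 4 - S k / 2 * (1/2 + W k/4)) := by
  have hK4 := hKle (k := k)
  have hK0 := hKpos hk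
  have hW1 := hW0 hk
  have hW4 := hWle (k := k)
  rw [g]
  rw [min_eq_right (by linarith : (0:ℝ) ≤ t)]
  rw [min_eq_right (by linarith : 1/2 - K k ≤ t), max_eq_left (by linarith : (0:ℝ) ≤ 1/2 - K k)]
  rw [min_eq_right (by linarith : (1:ℝ)/2 ≤ t), max_eq_left (by linarith : 1/2 - K k ≤ (1:ℝ)/2)]
  rw [min_eq_right h0, max_eq_left (by linarith : (1:ℝ)/2 ≤ 1/2 + W k/4)]
  rw [min_eq_left h1, max_eq_left h0]
  rw [min_eq_left (by linarith : t ≤ (3:ℝ)/4), max_eq_right h1]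
  rw [min_eq_left (by linarith : t ≤ (1:ℝ)), max_eq_right (by linarith : t ≤ (3:ℝ)/4)]
  rw [max_eq_right (by linarith : t ≤ (1:ℝ))]
  ring

lemma eval5 (hk : 0 < k) {t : ℝ} (h0 : 1/2 + W k/2 ≤ t) (h1 : t ≤ 3/4) :
    g k t = S k / 4 * t + (1 - K k + 3 * S k * W k / 8 - S k / 4 * (1/2 + W k/2)) := by
  have hK4 := hKle (k := k)
  have hK0 := hKpos hk
  have hW1 := hW0 hk
  have hW4 := hWle (k := k)
  rw [g]
  rw [min_eq_right (by linarith : (0:ℝ) ≤ t)]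
  rw [min_eq_right (by linarith : 1/2 - K k ≤ t), max_eq_left (by linarith : (0:ℝ) ≤ 1/2 - K k)]
  rw [min_eq_right (by linarith : (1:ℝ)/2 ≤ t), max_eq_left (by linarith : 1/2 - K k ≤ (1:ℝ)/2)]
  rw [min_eq_right (by linarith : 1/2 + W k/4 ≤ t), max_eq_left (by linarith : (1:ℝ)/2 ≤ 1/2 + W k/4)]
  rw [min_eq_right h0, max_eq_left (by linarith : 1/2 + W k/4 ≤ 1/2 + W k/2)]
  rw [min_eq_left h1, max_eq_left h0]
  rw [min_eq_left (by linarith : t ≤ (1:ℝ)), max_eq_right h1]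
  rw [max_eq_right (by linarith : t ≤ (1:ℝ))]
  ring

lemma eval6 (hk : 0 < k) {t : ℝ} (h0 : 3/4 ≤ t) (h1 : t ≤ 1) : g k t = t / 2 + 1/2 := by
  have hK4 := hKle (k := k)
  have hK0 := hKpos hk
  have hW1 := hW0 hk
  have hW4 := hWle (k := k)
  have hsw := hSW hk
  rw [g]
  rw [min_eq_right (by linarith : (0:ℝ) ≤ t)]
  rw [min_eq_right (by linarith : 1/2 - K k ≤ t), max_eq_left (by linarith : (0:ℝ) ≤ 1/2 - K k)]
  rw [min_eq_right (by linarith : (1:ℝ)/2 ≤ t), max_eq_left (by linarith : 1/2 - K k ≤ (1:ℝ)/2)]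
  rw [min_eq_right (by linarith : 1/2 + W k/4 ≤ t), max_eq_left (by linarith : (1:ℝ)/2 ≤ 1/2 + W k/4)]
  rw [min_eq_right (by linarith : 1/2 + W k/2 ≤ t), max_eq_left (by linarith : 1/2 + W k/4 ≤ 1/2 + W k/2)]
  rw [min_eq_right h0, max_eq_left (by linarith : 1/2 + W k/2 ≤ (3:ℝ)/4)]
  rw [min_eq_left h1, max_eq_left h0]
  rw [max_eq_right h1]
  nlinarith [hsw]

lemma eval7 (hk : 0 < k) {t : ℝ} (h : 1 ≤ t) : g k t = t := by
  have hK4 := hKle (k := k)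
  have hK0 := hKpos hk
  have hW1 := hW0 hk
  have hW4 := hWle (k := k)
  have hsw := hSW hk
  rw [g]
  rw [min_eq_right (by linarith : (0:ℝ) ≤ t)]
  rw [min_eq_right (by linarith : 1/2 - K k ≤ t), max_eq_left (by linarith : (0:ℝ) ≤ 1/2 - K k)]
  rw [min_eq_right (by linarith : (1:ℝ)/2 ≤ t), max_eq_left (by linarith : 1/2 - K k ≤ (1:ℝ)/2)]
  rw [min_eq_right (by linarith : 1/2 + W k/4 ≤ t), max_eq_left (by linarith : (1:ℝ)/2 ≤ 1/2 + W k/4)]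
  rw [min_eq_right (by linarith : 1/2 + W k/2 ≤ t), max_eq_left (by linarith : 1/2 + W k/4 ≤ 1/2 + W k/2)]
  rw [min_eq_right (by linarith : (3:ℝ)/4 ≤ t), max_eq_left (by linarith : 1/2 + W k/2 ≤ (3:ℝ)/4)]
  rw [min_eq_right h, max_eq_left (by linarith : (3:ℝ)/4 ≤ (1:ℝ))]
  rw [max_eq_left h]
  nlinarith [hsw]

end TFAux

namespace TFAux

variable {k : ℕ}

lemma clamp_mono (b c : ℝ) : Monotone fun t : ℝ => max (min t c) b :=
  (monotone_id.min monotone_const).max monotone_const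

lemma g_mono (hk : 0 < k) : Monotone (g k) := by
  have hS := hS0 (k := k)
  have h1 : Monotone fun t : ℝ => min t 0 := monotone_id.min monotone_const
  have h8 : Monotone fun t : ℝ => max t 1 - 1 := fun a b hab =>
    sub_le_sub_right (max_le_max hab le_rfl) 1
  have term : ∀ (m b c : ℝ), 0 ≤ m → Monotone fun t : ℝ => m * (max (min t c) b - b) := by
    intro m b c hm a a' haa'
    exact mul_le_mul_of_nonneg_left (sub_le_sub_right (clamp_mono b c haa') b) hm
  have h2 := term 2 0 (1/2 - K k) (by norm_num)
  have h3 := term 1 (1/2 - K k) (1/2) (by norm_num)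
  have h4 := term (S k) (1/2) (1/2 + W k/4) hS.le
  have h5 := term (S k/2) (1/2 + W k/4) (1/2 + W k/2) (by linarith)
  have h6 := term (S k/4) (1/2 + W k/2) (3/4) (by linarith)
  have h7 := term (1/2) (3/4) 1 (by norm_num)
  have : Monotone fun t : ℝ =>
      min t 0
      + 2 * (max (min t (1/2 - K k)) 0 - 0)
      + 1 * (max (min t (1/2)) (1/2 - K k) - (1/2 - K k))
      + S k * (max (min t (1/2 + W k/4)) (1/2) - 1/2)
      + (S k/2) * (max (min t (1/2 + W k/2)) (1/2 + W k/4) - (1/2 + W k/4))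
      + (S k/4) * (max (min t (3/4)) (1/2 + W k/2) - (1/2 + W k/2))
      + (1/2) * (max (min t 1) (3/4) - 3/4)
      + (max t 1 - 1) :=
    ((((((h1.add h2).add h3).add h4).add h5).add h6).add h7).add h8
  have heq : (g k) = fun t : ℝ =>
      min t 0
      + 2 * (max (min t (1/2 - K k)) 0 - 0)
      + 1 * (max (min t (1/2)) (1/2 - K k) - (1/2 - K k))
      + S k * (max (min t (1/2 + W k/4)) (1/2) - 1/2)
      + (S k/2) * (max (min t (1/2 + W k/2)) (1/2 + W k/4) - (1/2 + W k/4))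
      + (S k/4) * (max (min t (3/4)) (1/2 + W k/2) - (1/2 + W k/2))
      + (1/2) * (max (min t 1) (3/4) - 3/4)
      + (max t 1 - 1) := by
    funext t; rw [g]; ring
  rw [heq]
  exact this

lemma g_cont : Continuous (g k) := by
  unfold g
  fun_prop

lemma g_zero (hk : 0 < k) : g k 0 = 0 := by
  rw [eval0 hk le_rfl]

lemma g_one (hk : 0 < k) : g k 1 = 1 := by
  rw [eval7 hk le_rfl]

lemma g_strict (hk : 0 < k) : StrictMono (g k) := by
  have hK4 := hKle (k := k)
  have hK0 := hKpos hk
  have hK8 := hKgt hk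
  have hW1 := hW0 hk
  have hW4 := hWle (k := k)
  have hS := hS0 (k := k)
  have hmono := g_mono hk
  intro u v huv
  -- reduce to [0,1]
  rcases le_or_gt v 0 with hv0 | hv0
  · rw [eval0 hk (by linarith), eval0 hk hv0]; exact huv
  rcases lt_or_ge u 0 with hu0 | hu0
  · rw [eval0 hk hu0.le]
    calc u < 0 := hu0
    _ = g k 0 := (g_zero hk).symm
    _ ≤ g k v := hmono hv0.le
  rcases le_or_gt 1 u with hu1 | hu1
  · rw [eval7 hk hu1, eval7 hk (by linarith)]; exact huv
  rcases lt_or_ge 1 v with hv1 | hv1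
  · calc g k u ≤ g k 1 := hmono hu1.le
    _ = 1 := g_one hk
    _ < v := hv1
    _ = g k v := (eval7 hk hv1.le).symm
  -- now 0 ≤ u < v ≤ 1
  rcases lt_or_ge u (1/2 - K k) with h | hx1
  · have hw : u < min v (1/2 - K k) := lt_min huv h
    have hw2 : min v (1/2 - K k) ≤ v := min_le_left _ _
    calc g k u = 2 * u := eval1 hk hu0 h.le
    _ < 2 * min v (1/2 - K k) := by linarith
    _ = g k (min v (1/2 - K k)) := (eval1 hk (by linarith) (min_le_right _ _)).symm
    _ ≤ g k v := hmono hw2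
  rcases lt_or_ge u (1/2) with h | hx2
  · have hw : u < min v (1/2) := lt_min huv h
    calc g k u = u + (1/2 - K k) := eval2 hk hx1 h.le
    _ < min v (1/2) + (1/2 - K k) := by linarith
    _ = g k (min v (1/2)) := (eval2 hk (by linarith [min_le_left v (1/2), min_le_right v (1/2)] : 1/2 - K k ≤ min v (1/2)) (min_le_right _ _)).symm
    _ ≤ g k v := hmono (min_le_left _ _)
  rcases lt_or_ge u (1/2 + W k/4) with h | hx3
  · have hw : u < min v (1/2 + W k/4) := lt_min huv h
    calc g k u = S k * u + (1 - K k - S k / 2) := eval3 hk hx2 h.le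
    _ < S k * min v (1/2 + W k/4) + (1 - K k - S k / 2) := by nlinarith
    _ = g k (min v (1/2 + W k/4)) := (eval3 hk (by linarith [min_le_left v (1/2 + W k/4)] : (1:ℝ)/2 ≤ min v (1/2 + W k/4)) (min_le_right _ _)).symm
    _ ≤ g k v := hmono (min_le_left _ _)
  rcases lt_or_ge u (1/2 + W k/2) with h | hx4
  · have hw : u < min v (1/2 + W k/2) := lt_min huv h
    calc g k u = S k / 2 * u + (1 - K k + S k * W k / 4 - S k / 2 * (1/2 + W k/4)) := eval4 hk hx3 h.le
    _ < S k / 2 * min v (1/2 + W k/2) + (1 - K k + S k * W k / 4 - S k / 2 * (1/2 + W k/4)) := by nlinarith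
    _ = g k (min v (1/2 + W k/2)) := (eval4 hk (by linarith [min_le_left v (1/2 + W k/2)] : 1/2 + W k/4 ≤ min v (1/2 + W k/2)) (min_le_right _ _)).symm
    _ ≤ g k v := hmono (min_le_left _ _)
  rcases lt_or_ge u (3/4) with h | hx5
  · have hw : u < min v (3/4) := lt_min huv h
    calc g k u = S k / 4 * u + (1 - K k + 3 * S k * W k / 8 - S k / 4 * (1/2 + W k/2)) := eval5 hk hx4 h.le
    _ < S k / 4 * min v (3/4) + (1 - K k + 3 * S k * W k / 8 - S k / 4 * (1/2 + W k/2)) := by nlinarith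
    _ = g k (min v (3/4)) := (eval5 hk (by linarith [min_le_left v (3/4)] : 1/2 + W k/2 ≤ min v (3/4)) (min_le_right _ _)).symm
    _ ≤ g k v := hmono (min_le_left _ _)
  · calc g k u = u / 2 + 1/2 := eval6 hk hx5 hu1.le
    _ < v / 2 + 1/2 := by linarith
    _ = g k v := (eval6 hk (by linarith) hv1).symm

lemma g_surj (hk : 0 < k) : Function.Surjective (g k) := by
  intro y
  rcases le_or_gt y 0 with hy | hy
  · exact ⟨y, eval0 hk hy⟩
  rcases le_or_gt 1 y with hy1 | hy1
  · exact ⟨y, eval7 hk hy1⟩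
  have h01 : (0:ℝ) ≤ 1 := zero_le_one
  have := intermediate_value_Icc h01 (g_cont (k := k)).continuousOn
  rw [g_zero hk, g_one hk] at this
  obtain ⟨x, _, hx⟩ := this ⟨hy.le, hy1.le⟩
  exact ⟨x, hx⟩

end TFAux

namespace TFAux

variable {k : ℕ}

lemma g_half (hk : 0 < k) : g k (1/2) = 1 - K k := by
  rw [eval2 hk (by linarith [hKpos hk]) le_rfl]; ring

lemma g_above (hk : 0 < k) : ∀ x ∈ Ioo (0:ℝ) 1, x < g k x := by
  have hK4 := hKle (k := k)
  have hK0 := hKpos hk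
  rintro x ⟨hx0, hx1⟩
  rcases le_or_gt x (1/2 - K k) with h | h
  · rw [eval1 hk hx0.le h]; linarith
  rcases le_or_gt x (1/2) with h2 | h2
  · rw [eval2 hk h.le h2]; linarith
  rcases lt_or_ge x (3/4) with h3 | h3
  · calc x < 3/4 := h3
    _ ≤ 1 - K k := by linarith
    _ = g k (1/2) := (g_half hk).symm
    _ ≤ g k x := g_mono hk h2.le
  · rw [eval6 hk h3 hx1.le]; linarith

lemma hKz : K k = k * (2:ℝ) ^ (-(B k : ℤ)) := by
  rw [K, zpow_neg, zpow_natCast, div_eq_mul_inv]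

lemma g_tail (hk : 0 < k) {z : ℤ} (hz : (B k : ℤ) ≤ z) :
    g k (1 - k * (2:ℝ) ^ (-z)) = 1 - k * 2 ^ (-z - 1) := by
  have hK4 := hKle (k := k)
  have hK8 := hKgt hk
  have hple : (k : ℝ) * 2 ^ (-z) ≤ K k := by
    rw [hKz]
    have : (2:ℝ) ^ (-z) ≤ 2 ^ (-(B k : ℤ)) := by
      apply zpow_le_zpow_right₀ one_le_two
      omega
    have hk' : (0:ℝ) ≤ k := by positivity
    nlinarith
  have hppos : (0:ℝ) < (k : ℝ) * 2 ^ (-z) := by positivity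
  rw [eval6 hk (by linarith) (by linarith)]
  have : (2:ℝ) ^ (-z - 1) = 2 ^ (-z) / 2 := by
    rw [zpow_sub₀ (by norm_num : (2:ℝ) ≠ 0)]; norm_num
  rw [this]; ring

lemma tail_iter (hk : 0 < k) : ∀ d : ℕ,
    (g k)^[d] (1 - k * (2:ℝ) ^ (-(B k : ℤ))) = 1 - k * 2 ^ (-((B k : ℤ) + d)) := by
  intro d
  induction d with
  | zero => simp
  | succ d ih =>
    rw [Function.iterate_succ_apply', ih, g_tail hk (by omega : (B k : ℤ) ≤ (B k : ℤ) + d)]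
    congr 2
    push_cast
    ring

lemma double_iter (hk : 0 < k) : ∀ d : ℕ,
    (g k)^[d] ((2:ℝ) ^ (-(d : ℤ) - 2)) = 1/4 := by
  intro d
  induction d with
  | zero => norm_num
  | succ d ih =>
    have hK4 := hKle (k := k)
    rw [Function.iterate_succ_apply]
    have hsmall : (2:ℝ) ^ (-(d+1 : ℕ) - 2 : ℤ) ≤ 1/8 := by
      have : (2:ℝ) ^ (-(d+1 : ℕ) - 2 : ℤ) ≤ 2 ^ (-3 : ℤ) := by
        apply zpow_le_zpow_right₀ one_le_two
        push_cast; omega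
      norm_num at this ⊢
      linarith
    have hpos : (0:ℝ) < (2:ℝ) ^ (-(d+1 : ℕ) - 2 : ℤ) := by positivity
    rw [eval1 hk hpos.le (by linarith)]
    have h2 : 2 * (2:ℝ) ^ (-(d+1 : ℕ) - 2 : ℤ) = 2 ^ (-(d:ℤ) - 2) := by
      rw [show (-(d:ℤ) - 2) = (-(d+1 : ℕ) - 2 : ℤ) + 1 by push_cast; ring,
        zpow_add_one₀ (by norm_num : (2:ℝ) ≠ 0)]
      ring
    rw [h2, ih]

end TFAux

namespace TFAux

variable {k : ℕ}

lemma Sdiv2 : (2:ℝ) ^ ((E k : ℤ) - (B k : ℤ) - 1) = S k / 2 := by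
  rw [S, zpow_sub₀ (by norm_num : (2:ℝ) ≠ 0) _ 1, zpow_one]

lemma Sdiv4 : (2:ℝ) ^ ((E k : ℤ) - (B k : ℤ) - 2) = S k / 4 := by
  rw [show (E k : ℤ) - (B k : ℤ) - 2 = (E k : ℤ) - (B k : ℤ) - 1 - 1 by ring,
    zpow_sub₀ (by norm_num : (2:ℝ) ≠ 0) _ 1, zpow_one, Sdiv2]
  ring

lemma hB2 : 2 ≤ B k := by rw [B]; omega

lemma orbit (hk : 0 < k) {j : ℕ} (hj : B k ≤ j) :
    (g k)^[(j - B k) + (1 + (1 + (j - 2)))] ((2:ℝ) ^ (-(j:ℤ))) =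
      1 - k * 2 ^ (-(j:ℤ)) := by
  have hK4 := hKle (k := k)
  have hj2 : 2 ≤ j := le_trans hB2 hj
  have e1 : (2:ℝ) ^ (-(j:ℤ)) = 2 ^ (-((j - 2 : ℕ) : ℤ) - 2) := by
    congr 1; omega
  have s1 : (g k)^[j-2] ((2:ℝ)^(-(j:ℤ))) = 1/4 := by
    rw [e1]; exact double_iter hk (j-2)
  have s2 : g k (1/4) = 1/2 := by
    rw [eval1 hk (by norm_num) (by linarith)]; norm_num
  have s3 : g k (1/2) = 1 - k * 2 ^ (-(B k : ℤ)) := by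
    rw [g_half hk, hKz]
  have s4 : (g k)^[j - B k] (1 - k * (2:ℝ) ^ (-(B k : ℤ))) = 1 - k * 2 ^ (-(j:ℤ)) := by
    have := tail_iter hk (j - B k)
    rw [show -((B k : ℤ) + ((j - B k : ℕ) : ℤ)) = -(j:ℤ) by omega] at this
    exact this
  rw [Function.iterate_add_apply, Function.iterate_add_apply, Function.iterate_add_apply,
    s1, Function.iterate_one, s2, s3, s4]

end TFAux

open TFAux in
/-- For every odd positive integer `k` there is `g` in Thompson's group `F` with
`g(x) > x` on `(0,1)`, `g'(0) = 2`, `g'(1) = 1/2`, such that for all large `j` the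
points `2^{-j}` and `1 - k·2^{-j}` lie on the same `⟨g⟩`-orbit. -/
theorem thompson_beta_surjective (k : ℕ) (hk : Odd k) (hk0 : 0 < k) :
    ∃ g : ℝ → ℝ, MemF g ∧ (∀ x ∈ Ioo (0 : ℝ) 1, x < g x) ∧
      Slope0 g 2 ∧ Slope1 g (1 / 2) ∧
      ∃ J : ℕ, ∀ j : ℕ, J ≤ j →
        ∃ n : ℕ, g^[n] ((2 : ℝ) ^ (-(j : ℤ))) = 1 - (k : ℝ) * (2 : ℝ) ^ (-(j : ℤ)) := by
  classical
  have hK4 := TFAux.hKle (k := k)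
  have hK0 := TFAux.hKpos hk0
  have hK8 := TFAux.hKgt hk0
  have hW1 := TFAux.hW0 hk0
  have hW4 := TFAux.hWle (k := k)
  have hS := TFAux.hS0 (k := k)
  refine ⟨TFAux.g k, ?_, TFAux.g_above hk0, ?_, ?_, ?_⟩
  · refine ⟨⟨(TFAux.g_strict hk0).injective, TFAux.g_surj hk0⟩, TFAux.g_strict hk0,
      TFAux.g_zero hk0, TFAux.g_one hk0, ?_, ?_⟩
    · intro x hx
      simp only [mem_Icc, not_and_or, not_le] at hx
      rcases hx with h | h
      · exact TFAux.eval0 hk0 h.le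
      · exact TFAux.eval7 hk0 h.le
    · refine ⟨6, ![0, 1/2 - TFAux.K k, 1/2, 1/2 + TFAux.W k/4, 1/2 + TFAux.W k/2, 3/4, 1],
        ?_, rfl, rfl, ?_, ?_⟩
      · apply Fin.strictMono_iff_lt_succ.mpr
        intro i
        fin_cases i
        · show (0:ℝ) < 1/2 - TFAux.K k
          linarith
        · show 1/2 - TFAux.K k < (1:ℝ)/2
          linarith
        · show (1:ℝ)/2 < 1/2 + TFAux.W k/4
          linarith
        · show 1/2 + TFAux.W k/4 < 1/2 + TFAux.W k/2
          linarith
        · show 1/2 + TFAux.W k/2 < (3:ℝ)/4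
          linarith
        · show (3:ℝ)/4 < (1:ℝ)
          norm_num
      · intro i
        fin_cases i
        · exact ⟨0, 0, by norm_num⟩
        · refine ⟨2 ^ B k - 2 * k, B k + 1, ?_⟩
          show 1/2 - TFAux.K k = _
          rw [TFAux.K, eq_div_iff (by positivity : ((2:ℝ) ^ (B k + 1)) ≠ 0)]
          push_cast
          rw [pow_succ]
          field_simp
        · exact ⟨1, 1, by norm_num⟩
        · refine ⟨7 * 2 ^ E k + 2 * D k, E k + 4, ?_⟩
          show 1/2 + TFAux.W k/4 = _
          rw [TFAux.W, eq_div_iff (by positivity : ((2:ℝ) ^ (E k + 4)) ≠ 0)]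
          push_cast
          rw [pow_succ, pow_add]
          field_simp
          ring
        · refine ⟨3 * 2 ^ E k + 2 * D k, E k + 3, ?_⟩
          show 1/2 + TFAux.W k/2 = _
          rw [TFAux.W, eq_div_iff (by positivity : ((2:ℝ) ^ (E k + 3)) ≠ 0)]
          push_cast
          rw [pow_succ, pow_add]
          field_simp
          ring
        · exact ⟨3, 2, by norm_num⟩
        · exact ⟨1, 0, by norm_num⟩
      · intro i
        fin_cases i
        · refine ⟨1, 0, fun t ht => ?_⟩
          have ht' : t ∈ Icc (0:ℝ) (1/2 - TFAux.K k) := ht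
          show TFAux.g k t = 2 ^ (1:ℤ) * t + 0
          rw [TFAux.eval1 hk0 ht'.1 ht'.2]
          norm_num
        · refine ⟨0, 1/2 - TFAux.K k, fun t ht => ?_⟩
          have ht' : t ∈ Icc (1/2 - TFAux.K k) ((1:ℝ)/2) := ht
          show TFAux.g k t = 2 ^ (0:ℤ) * t + (1/2 - TFAux.K k)
          rw [TFAux.eval2 hk0 ht'.1 ht'.2]
          norm_num
        · refine ⟨(E k : ℤ) - (B k : ℤ), 1 - TFAux.K k - TFAux.S k / 2, fun t ht => ?_⟩
          have ht' : t ∈ Icc ((1:ℝ)/2) (1/2 + TFAux.W k/4) := ht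
          show TFAux.g k t = 2 ^ ((E k : ℤ) - (B k : ℤ)) * t + (1 - TFAux.K k - TFAux.S k / 2)
          rw [TFAux.eval3 hk0 ht'.1 ht'.2]
          rfl
        · refine ⟨(E k : ℤ) - (B k : ℤ) - 1,
            1 - TFAux.K k + TFAux.S k * TFAux.W k / 4 - TFAux.S k / 2 * (1/2 + TFAux.W k/4),
            fun t ht => ?_⟩
          have ht' : t ∈ Icc (1/2 + TFAux.W k/4) (1/2 + TFAux.W k/2) := ht
          show TFAux.g k t = 2 ^ ((E k : ℤ) - (B k : ℤ) - 1) * t +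
            (1 - TFAux.K k + TFAux.S k * TFAux.W k / 4 - TFAux.S k / 2 * (1/2 + TFAux.W k/4))
          rw [TFAux.eval4 hk0 ht'.1 ht'.2, TFAux.Sdiv2]
        · refine ⟨(E k : ℤ) - (B k : ℤ) - 2,
            1 - TFAux.K k + 3 * TFAux.S k * TFAux.W k / 8 - TFAux.S k / 4 * (1/2 + TFAux.W k/2),
            fun t ht => ?_⟩
          have ht' : t ∈ Icc (1/2 + TFAux.W k/2) ((3:ℝ)/4) := ht
          show TFAux.g k t = 2 ^ ((E k : ℤ) - (B k : ℤ) - 2) * t +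
            (1 - TFAux.K k + 3 * TFAux.S k * TFAux.W k / 8 - TFAux.S k / 4 * (1/2 + TFAux.W k/2))
          rw [TFAux.eval5 hk0 ht'.1 ht'.2, TFAux.Sdiv4]
        · refine ⟨-1, 1/2, fun t ht => ?_⟩
          have ht' : t ∈ Icc ((3:ℝ)/4) (1:ℝ) := ht
          show TFAux.g k t = 2 ^ (-1:ℤ) * t + 1/2
          rw [TFAux.eval6 hk0 ht'.1 ht'.2]
          norm_num
          ring
  · exact ⟨1/4, by norm_num, fun t ht => by
      rw [TFAux.eval1 hk0 ht.1 (le_trans ht.2 (by linarith))]⟩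
  · exact ⟨1/4, by norm_num, fun t ht => by
      rw [TFAux.eval6 hk0 (by linarith [ht.1] : (3:ℝ)/4 ≤ t) ht.2]; ring⟩
  · refine ⟨B k, fun j hj => ⟨(j - B k) + (1 + (1 + (j - 2))), ?_⟩⟩
    exact TFAux.orbit hk0 hj
end

section
/- Let g ∈ F with g(x) > x on (0,1), g′(0) = 2, g′(1) = 1/2, and suppose for all large j the points 2^{-j} and 1 - k·2^{-j} (k a fixed odd positive integer) lie on one ⟨g⟩-orbit. Then for any f ∈ F, the conjugate f g f⁻¹ has the same property with the same k (the invariant β is a class function). -/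
open Set

lemma memF_lin0 {f : ℝ → ℝ} (hf : MemF f) :
    ∃ m : ℤ, ∃ ε > (0:ℝ), ∀ t ∈ Icc (0:ℝ) ε, f t = 2 ^ m * t := by
  obtain ⟨-, -, hf0, -, -, n, x, hxm, hx0, hxl, -, hp⟩ := hf
  match n with
  | 0 => simp [hx0] at hxl
  | Nat.succ n =>
    obtain ⟨m, d, hmd⟩ := hp 0
    have h0 : x (Fin.castSucc 0) = 0 := hx0
    have hlt : (0:ℝ) < x (Fin.succ 0) := by
      rw [← h0]; exact hxm (by simp [Fin.lt_def])
    have hd : d = 0 := by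
      have := hmd 0 ⟨h0.le, h0 ▸ hlt.le⟩
      rw [hf0] at this; linarith
    exact ⟨m, x (Fin.succ 0), hlt, fun t ht =>
      by rw [hmd t ⟨h0 ▸ ht.1, ht.2⟩, hd, add_zero]⟩

lemma memF_lin1 {f : ℝ → ℝ} (hf : MemF f) :
    ∃ m : ℤ, ∃ ε > (0:ℝ), ∀ t ∈ Icc (1-ε) (1:ℝ), f t = 2 ^ m * (t - 1) + 1 := by
  obtain ⟨-, -, -, hf1, -, n, x, hxm, hx0, hxl, -, hp⟩ := hf
  match n with
  | 0 => simp [hx0] at hxl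
  | Nat.succ n =>
    obtain ⟨m, d, hmd⟩ := hp (Fin.last n)
    have h1 : x ((Fin.last n).succ) = 1 := by rw [← hxl]; congr 1
    have hlt : x ((Fin.last n).castSucc) < 1 := by
      rw [← h1]; exact hxm Fin.castSucc_lt_succ
    have hd : d = 1 - 2 ^ m := by
      have := hmd 1 ⟨hlt.le, h1.ge⟩
      rw [hf1] at this; linarith
    refine ⟨m, 1 - x ((Fin.last n).castSucc), by linarith, fun t ht => ?_⟩
    have : f t = 2 ^ m * t + d := hmd t ⟨by linarith [ht.1], h1 ▸ ht.2⟩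
    rw [this, hd]; ring

lemma inv_mul0 {f f' : ℝ → ℝ} (hinv : ∀ x, f' (f x) = x)
    {c c' ε ε' : ℝ} (hε : 0 < ε) (hε' : 0 < ε') (hc : 0 < c)
    (hfl : ∀ t ∈ Icc (0:ℝ) ε, f t = c * t) (hfl' : ∀ t ∈ Icc (0:ℝ) ε', f' t = c' * t) :
    c' * c = 1 := by
  set t := min ε (ε' / c) with ht
  have htpos : 0 < t := lt_min hε (div_pos hε' hc)
  have h1 : f t = c * t := hfl t ⟨htpos.le, min_le_left _ _⟩
  have h2 : c * t ≤ ε' := by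
    rw [← le_div_iff₀' hc]; exact min_le_right _ _
  have h3 : f' (f t) = c' * (c * t) := by
    rw [h1]; exact hfl' _ ⟨by positivity, h2⟩
  rw [hinv] at h3
  have : (c' * c - 1) * t = 0 := by linarith [h3]
  rcases mul_eq_zero.1 this with h | h
  · linarith
  · exact absurd h htpos.ne'

lemma inv_mul1 {f f' : ℝ → ℝ} (hinv : ∀ x, f' (f x) = x)
    {c c' ε ε' : ℝ} (hε : 0 < ε) (hε' : 0 < ε') (hc : 0 < c)
    (hfl : ∀ t ∈ Icc (1-ε) (1:ℝ), f t = c * (t - 1) + 1)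
    (hfl' : ∀ t ∈ Icc (1-ε') (1:ℝ), f' t = c' * (t - 1) + 1) :
    c' * c = 1 := by
  set s := min ε (ε' / c) with hs
  have hspos : 0 < s := lt_min hε (div_pos hε' hc)
  set t := 1 - s with htdef
  have hsε : s ≤ ε := min_le_left _ _
  have h1 : f t = c * (t - 1) + 1 := hfl t ⟨by simp only [htdef]; linarith, by simp only [htdef]; linarith⟩
  have h2 : c * s ≤ ε' := by rw [← le_div_iff₀' hc]; exact min_le_right _ _
  have h3 : f' (f t) = c' * (f t - 1) + 1 := by
    refine hfl' _ ⟨?_, ?_⟩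
    · rw [h1]; simp only [htdef]; nlinarith
    · rw [h1]; simp only [htdef]; nlinarith
  rw [hinv, h1] at h3
  have : (c' * c - 1) * s = 0 := by simp only [htdef] at h3; nlinarith
  rcases mul_eq_zero.1 this with h | h
  · linarith
  · exact absurd h hspos.ne'

lemma exists_thresh (c ε : ℝ) (hε : 0 < ε) :
    ∃ N : ℕ, ∀ z : ℤ, (N:ℤ) ≤ z → c * (2:ℝ) ^ (-z) ≤ ε := by
  rcases le_or_gt c 0 with hc | hc
  · exact ⟨0, fun z _ => le_trans (mul_nonpos_of_nonpos_of_nonneg hc (by positivity)) hε.le⟩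
  obtain ⟨N, hN⟩ := pow_unbounded_of_one_lt (c / ε) (by norm_num : (1:ℝ) < 2)
  refine ⟨N, fun z hz => ?_⟩
  have h1 : (2:ℝ) ^ (-z) ≤ 2 ^ (-(N:ℤ)) :=
    zpow_le_zpow_right₀ one_le_two (by omega)
  have h2 : (2:ℝ) ^ (-(N:ℤ)) = ((2:ℝ)^N)⁻¹ := by
    rw [zpow_neg, zpow_natCast]
  have h3 : c / ε < 2 ^ N := hN
  have hp : (0:ℝ) < 2 ^ N := by positivity
  calc c * (2:ℝ)^(-z) ≤ c * ((2:ℝ)^N)⁻¹ := by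
        rw [← h2]; exact mul_le_mul_of_nonneg_left h1 hc.le
    _ ≤ ε := by
        rw [mul_inv_le_iff₀ hp]
        nlinarith [div_lt_iff₀ hε |>.1 h3]

/-- iterating g up the 2^{-z} ladder -/
lemma ladder0 {g : ℝ → ℝ} {ε : ℝ} (hg : ∀ t ∈ Icc (0:ℝ) ε, g t = 2 * t)
    {N : ℕ} (hN : ∀ z : ℤ, (N:ℤ) ≤ z → (1:ℝ) * (2:ℝ) ^ (-z) ≤ ε) :
    ∀ z : ℤ, (N:ℤ) ≤ z → ∀ a : ℕ, g^[a] ((2:ℝ) ^ (-(z + a))) = 2 ^ (-z) := by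
  intro z hz a
  induction a with
  | zero => simp
  | succ a ih =>
    rw [Function.iterate_succ_apply]
    have hmem : (2:ℝ) ^ (-(z + (a+1:ℕ))) ∈ Icc (0:ℝ) ε := by
      constructor
      · positivity
      · have := hN (z + (a+1:ℕ)) (by push_cast; omega)
        linarith
    rw [hg _ hmem]
    have : 2 * (2:ℝ) ^ (-(z + (a+1:ℕ))) = (2:ℝ) ^ (-(z + a)) := by
      rw [← zpow_one_add₀ (by norm_num : (2:ℝ) ≠ 0)]
      congr 1; push_cast; ring
    rw [this, ih]

/-- iterating g down the 1 - k·2^{-z} ladder -/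
lemma ladder1 {g : ℝ → ℝ} {ε : ℝ} (k : ℕ)
    (hg : ∀ t ∈ Icc (1-ε) (1:ℝ), g t = (1/2) * (t - 1) + 1)
    {N : ℕ} (hN : ∀ z : ℤ, (N:ℤ) ≤ z → (k:ℝ) * (2:ℝ) ^ (-z) ≤ ε) :
    ∀ z : ℤ, (N:ℤ) ≤ z → ∀ b : ℕ,
      g^[b] (1 - (k:ℝ) * 2 ^ (-z)) = 1 - (k:ℝ) * 2 ^ (-(z + b)) := by
  intro z hz b
  induction b generalizing z with
  | zero => simp
  | succ b ih =>
    rw [Function.iterate_succ_apply]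
    have hmem : 1 - (k:ℝ) * 2 ^ (-z) ∈ Icc (1-ε) (1:ℝ) := by
      constructor
      · linarith [hN z hz]
      · have : (0:ℝ) ≤ (k:ℝ) * 2 ^ (-z) := by positivity
        linarith
    rw [hg _ hmem]
    have heq : (1/2:ℝ) * (1 - (k:ℝ) * 2 ^ (-z) - 1) + 1 = 1 - (k:ℝ) * 2 ^ (-(z+1)) := by
      rw [show (2:ℝ) ^ (-(z+1)) = (2:ℝ)^(-z) * (2:ℝ)^(-1:ℤ) by
        rw [← zpow_add₀ (by norm_num : (2:ℝ) ≠ 0)]; congr 1; ring]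
      norm_num; ring
    rw [heq]
    have := ih (z+1) (by omega)
    rw [this]; congr 2; push_cast; ring

lemma conj_iterate {f g f' : ℝ → ℝ} (hinv : Function.LeftInverse f' f) :
    ∀ (n : ℕ) (x : ℝ), (f ∘ g ∘ f')^[n] (f x) = f (g^[n] x) := by
  intro n
  induction n with
  | zero => intro x; simp
  | succ n ih =>
    intro x
    rw [Function.iterate_succ_apply, Function.iterate_succ_apply]
    have : (f ∘ g ∘ f') (f x) = f (g x) := by
      simp only [Function.comp_apply, hinv x]
    rw [this, ih]


/-- The invariant `β` is a class function on `F`: if `2^{-j}` and `1 - k·2^{-j}` lie on one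
`⟨g⟩`-orbit for all large `j`, the same holds (with the same odd `k`) for any conjugate
`f g f⁻¹` of `g` in Thompson's group `F`. -/
theorem thompson_beta_class_invariant (g f f' : ℝ → ℝ) (k : ℕ) (hk : Odd k) (hk0 : 0 < k)
    (hg : MemF g) (hgx : ∀ x ∈ Ioo (0 : ℝ) 1, x < g x)
    (hg0 : Slope0 g 2) (hg1 : Slope1 g (1 / 2))
    (hβ : ∃ J : ℕ, ∀ j : ℕ, J ≤ j →
      ∃ n : ℕ, g^[n] ((2 : ℝ) ^ (-(j : ℤ))) = 1 - (k : ℝ) * (2 : ℝ) ^ (-(j : ℤ)))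
    (hf : MemF f) (hf' : MemF f')
    (hinv : Function.LeftInverse f' f) (hinv' : Function.RightInverse f' f) :
    (∀ x ∈ Ioo (0 : ℝ) 1, x < (f ∘ g ∘ f') x) ∧
      Slope0 (f ∘ g ∘ f') 2 ∧ Slope1 (f ∘ g ∘ f') (1 / 2) ∧
      ∃ J : ℕ, ∀ j : ℕ, J ≤ j →
        ∃ n : ℕ, (f ∘ g ∘ f')^[n] ((2 : ℝ) ^ (-(j : ℤ)))
          = 1 - (k : ℝ) * (2 : ℝ) ^ (-(j : ℤ)) := by
  obtain ⟨m0f, ε0f, hε0f, hf0l⟩ := memF_lin0 hf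
  obtain ⟨m1f, ε1f, hε1f, hf1l⟩ := memF_lin1 hf
  obtain ⟨m0f', ε0f', hε0f', hf'0l⟩ := memF_lin0 hf'
  obtain ⟨m1f', ε1f', hε1f', hf'1l⟩ := memF_lin1 hf'
  obtain ⟨εg0, hεg0, hg0l⟩ := hg0
  obtain ⟨εg1, hεg1, hg1l⟩ := hg1
  have hc0 : (0:ℝ) < 2 ^ m0f := zpow_pos (by norm_num) _
  have hc0' : (0:ℝ) < 2 ^ m0f' := zpow_pos (by norm_num) _
  have hc1 : (0:ℝ) < 2 ^ m1f := zpow_pos (by norm_num) _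
  have hc1' : (0:ℝ) < 2 ^ m1f' := zpow_pos (by norm_num) _
  have hcc0 : (2:ℝ) ^ m0f * 2 ^ m0f' = 1 :=
    inv_mul0 (fun x => hinv' x) hε0f' hε0f hc0' hf'0l hf0l
  have hcc1 : (2:ℝ) ^ m1f * 2 ^ m1f' = 1 :=
    inv_mul1 (fun x => hinv' x) hε1f' hε1f hc1' hf'1l hf1l
  refine ⟨?_, ?_, ?_, ?_⟩
  · -- part 1
    intro x hx
    have hf'mem : f' x ∈ Ioo (0:ℝ) 1 := by
      obtain ⟨-, hmono', h0', h1', -⟩ := hf'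
      exact ⟨h0' ▸ hmono' hx.1, h1' ▸ hmono' hx.2⟩
    calc x = f (f' x) := (hinv' x).symm
      _ < f (g (f' x)) := hf.2.1 (hgx _ hf'mem)
  · -- part 2 : Slope0
    refine ⟨min ε0f' (min (εg0 / 2 ^ m0f') (ε0f / (2 * 2 ^ m0f'))),
      lt_min hε0f' (lt_min (by positivity) (by positivity)), fun t ht => ?_⟩
    obtain ⟨ht0, htε⟩ := ht
    have h1 : f' t = 2 ^ m0f' * t := hf'0l t ⟨ht0, htε.trans (min_le_left _ _)⟩
    have h2 : 2 ^ m0f' * t ≤ εg0 := by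
      have : t ≤ εg0 / 2 ^ m0f' := htε.trans ((min_le_right _ _).trans (min_le_left _ _))
      rw [le_div_iff₀ hc0'] at this; linarith
    have h3 : g (2 ^ m0f' * t) = 2 * (2 ^ m0f' * t) :=
      hg0l _ ⟨by positivity, h2⟩
    have h4 : 2 * (2 ^ m0f' * t) ≤ ε0f := by
      have : t ≤ ε0f / (2 * 2 ^ m0f') := htε.trans ((min_le_right _ _).trans (min_le_right _ _))
      rw [le_div_iff₀ (by positivity)] at this; linarith
    have h5 : f (2 * (2 ^ m0f' * t)) = 2 ^ m0f * (2 * (2 ^ m0f' * t)) :=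
      hf0l _ ⟨by positivity, h4⟩
    simp only [Function.comp_apply, h1, h3, h5]
    linear_combination 2 * t * hcc0
  · -- part 3 : Slope1
    refine ⟨min ε1f' (min (εg1 / 2 ^ m1f') (2 * ε1f / 2 ^ m1f')),
      lt_min hε1f' (lt_min (by positivity) (by positivity)), fun t ht => ?_⟩
    obtain ⟨ht0, ht1⟩ := ht
    have hεle1 : min ε1f' (min (εg1 / 2 ^ m1f') (2 * ε1f / 2 ^ m1f')) ≤ ε1f' := min_le_left _ _
    have htb : 1 - t ≤ min ε1f' (min (εg1 / 2 ^ m1f') (2 * ε1f / 2 ^ m1f')) := by linarith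
    have h1 : f' t = 2 ^ m1f' * (t - 1) + 1 := hf'1l t ⟨by linarith, ht1⟩
    have hA : 2 ^ m1f' * (1 - t) ≤ εg1 := by
      have h : 1 - t ≤ εg1 / 2 ^ m1f' := htb.trans ((min_le_right _ _).trans (min_le_left _ _))
      rw [le_div_iff₀ hc1'] at h; linarith
    have h3 : g (2 ^ m1f' * (t - 1) + 1) = (1/2) * ((2 ^ m1f' * (t - 1) + 1) - 1) + 1 := by
      refine hg1l _ ⟨by nlinarith, by nlinarith⟩
    have hB : (1/2) * (2 ^ m1f' * (1 - t)) ≤ ε1f := by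
      have h : 1 - t ≤ 2 * ε1f / 2 ^ m1f' := htb.trans ((min_le_right _ _).trans (min_le_right _ _))
      rw [le_div_iff₀ hc1'] at h; linarith
    have h5 : f ((1/2) * ((2 ^ m1f' * (t - 1) + 1) - 1) + 1)
        = 2 ^ m1f * (((1/2) * ((2 ^ m1f' * (t - 1) + 1) - 1) + 1) - 1) + 1 := by
      refine hf1l _ ⟨by nlinarith, by nlinarith⟩
    simp only [Function.comp_apply, h1, h3, h5]
    linear_combination ((t - 1) / 2) * hcc1
  · -- part 4
    obtain ⟨J, hJ⟩ := hβ
    obtain ⟨N1, hN1⟩ := exists_thresh 1 εg0 hεg0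
    obtain ⟨N2, hN2⟩ := exists_thresh k εg1 hεg1
    set j₀ : ℕ := max J (max N1 N2) with hj₀
    obtain ⟨n₀, hn₀⟩ := hJ j₀ (le_max_left _ _)
    obtain ⟨N3, hN3⟩ := exists_thresh 1 ε0f' hε0f'
    obtain ⟨N4, hN4⟩ := exists_thresh k ε1f hε1f
    refine ⟨N3 + N4 + j₀ + m0f'.toNat + (-m1f).toNat, fun j hj => ?_⟩
    have hm0' : m0f' ≤ m0f'.toNat := Int.self_le_toNat _
    have hm1 : -m1f ≤ (-m1f).toNat := Int.self_le_toNat _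
    have hja : (j₀:ℤ) ≤ (j:ℤ) - m0f' := by push_cast at hj ⊢; omega
    have hjb : (j₀:ℤ) ≤ (j:ℤ) + m1f := by push_cast at hj ⊢; omega
    set a : ℕ := ((j:ℤ) - m0f' - j₀).toNat with hadef
    set b : ℕ := ((j:ℤ) + m1f - j₀).toNat with hbdef
    have ha : (a:ℤ) = (j:ℤ) - m0f' - j₀ := Int.toNat_of_nonneg (by omega)
    have hb : (b:ℤ) = (j:ℤ) + m1f - j₀ := Int.toNat_of_nonneg (by omega)
    refine ⟨b + (n₀ + a), ?_⟩
    -- f' sends 2^{-j} to 2^{-(j₀+a)}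
    have hjN3 : (1:ℝ) * 2 ^ (-(j:ℤ)) ≤ ε0f' := hN3 j (by push_cast at hj ⊢; omega)
    have step1 : f' ((2:ℝ) ^ (-(j:ℤ))) = (2:ℝ) ^ (-((j₀:ℤ) + a)) := by
      rw [hf'0l _ ⟨by positivity, by linarith⟩, ← zpow_add₀ (by norm_num : (2:ℝ) ≠ 0)]
      congr 1; omega
    have step3 : g^[a] ((2:ℝ) ^ (-((j₀:ℤ) + a))) = 2 ^ (-(j₀:ℤ)) :=
      ladder0 hg0l hN1 j₀ (by exact_mod_cast le_trans (le_max_left N1 N2) (le_max_right J _)) a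
    have step5 : g^[b] (1 - (k:ℝ) * 2 ^ (-(j₀:ℤ))) = 1 - (k:ℝ) * 2 ^ (-((j₀:ℤ) + b)) :=
      ladder1 k hg1l hN2 j₀ (by exact_mod_cast le_trans (le_max_right N1 N2) (le_max_right J _)) b
    have hexp : -((j₀:ℤ) + b) = -((j:ℤ) + m1f) := by omega
    have hjN4 : (k:ℝ) * 2 ^ (-((j:ℤ) + m1f)) ≤ ε1f := hN4 _ (by push_cast at hj ⊢; omega)
    have step6 : f (1 - (k:ℝ) * 2 ^ (-((j:ℤ) + m1f))) = 1 - (k:ℝ) * 2 ^ (-(j:ℤ)) := by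
      have hmem : 1 - (k:ℝ) * 2 ^ (-((j:ℤ) + m1f)) ∈ Icc (1 - ε1f) (1:ℝ) := by
        constructor
        · linarith
        · have : (0:ℝ) ≤ (k:ℝ) * 2 ^ (-((j:ℤ) + m1f)) := by positivity
          linarith
      rw [hf1l _ hmem]
      have : (2:ℝ) ^ m1f * 2 ^ (-((j:ℤ) + m1f)) = 2 ^ (-(j:ℤ)) := by
        rw [← zpow_add₀ (by norm_num : (2:ℝ) ≠ 0)]; congr 1; ring
      linear_combination (-(k:ℝ)) * this
    calc (f ∘ g ∘ f')^[b + (n₀ + a)] ((2:ℝ) ^ (-(j:ℤ)))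
        = (f ∘ g ∘ f')^[b + (n₀ + a)] (f (f' ((2:ℝ) ^ (-(j:ℤ))))) := by rw [hinv' _]
      _ = f (g^[b + (n₀ + a)] (f' ((2:ℝ) ^ (-(j:ℤ))))) := conj_iterate hinv _ _
      _ = f (g^[b] (g^[n₀] (g^[a] ((2:ℝ) ^ (-((j₀:ℤ) + a)))))) := by
          rw [step1, Function.iterate_add_apply, Function.iterate_add_apply]
      _ = 1 - (k:ℝ) * 2 ^ (-(j:ℤ)) := by
          rw [step3, hn₀, step5, hexp, step6]
end
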